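/- (Jensen bound for the AR(1) differential entropy sum.) Let φ(x) := (1/2)·log₂(2·π·e·x) for x > 0. For all real p with 0 < p ≤ 1/2 and all real ρ with 0 < ρ < 1, the series Σ_{k=1}^∞ φ(1 − ρ^{4k})·2·C_{k−1}·((1−p)·p)^k converges and satisfies Σ_{k=1}^∞ φ(1 − ρ^{4k})·2·C_{k−1}·((1−p)·p)^k ≤ 2·p·φ( ((1 − 4·(1−p)·p·ρ⁴)^{1/2} − (1 − 2·p)) / (2·p) ), where C_t denotes the t-th Catalan number. -/

import Mathlib

open Finset

/-! With `q = (1-p)p` and `r = ρ⁴`, the weights `w k = 2 C_k q^(k+1)` are nonnegative and, by the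
Catalan generating function `∑ C_k x^(k+1) = (1 - √(1 - 4x))/2`, sum to `1 - √(1 - 4q) = 2p`.
The same generating function at `x = qr` shows that the `w`-weighted mean of the points
`1 - r^(k+1)` is `m = (√(1 - 4qr) - (1 - 2p))/(2p)`. Since `φ` is concave, it lies below its
tangent line at `m`, and summing the tangent inequality against `w` is Jensen's inequality for
the (infinite) weighted sum. -/

noncomputable def gaussEnt (x : ℝ) : ℝ :=
  (1 / 2) * Real.logb 2 (2 * Real.pi * Real.exp 1 * x)

lemma catalan_succ_mul_pow_eq_sum_antidiagonal {R : Type*} [CommSemiring R] (x : R) (n : ℕ) :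
    (catalan (n + 1) : R) * x ^ (n + 1 + 1) =
      ∑ ij ∈ antidiagonal n,
        (catalan ij.1 * x ^ (ij.1 + 1)) * (catalan ij.2 * x ^ (ij.2 + 1)) := by
  rw [catalan_succ', Nat.cast_sum, Finset.sum_mul]
  refine Finset.sum_congr rfl fun ij hij => ?_
  rw [HasAntidiagonal.mem_antidiagonal] at hij
  rw [Nat.cast_mul, ← hij]
  ring

lemma sum_range_sum_antidiagonal_le_sq {f : ℕ → ℝ} (hf : ∀ k, 0 ≤ f k) (N : ℕ) :
    ∑ n ∈ range N, ∑ ij ∈ antidiagonal n, f ij.1 * f ij.2 ≤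
      (∑ k ∈ range N, f k) ^ 2 := by
  rw [← Finset.sum_biUnion fun a _ b _ hab => Finset.disjoint_left.2 fun ij ha hb =>
      hab ((HasAntidiagonal.mem_antidiagonal.1 ha).symm.trans
        (HasAntidiagonal.mem_antidiagonal.1 hb)),
    sq, Finset.sum_mul_sum, ← Finset.sum_product']
  refine Finset.sum_le_sum_of_subset_of_nonneg (fun ij hij => ?_)
    fun ij _ _ => mul_nonneg (hf _) (hf _)
  simp only [Finset.mem_biUnion, Finset.mem_range, HasAntidiagonal.mem_antidiagonal,
    Finset.mem_product] at hij ⊢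
  omega

lemma sum_range_catalan_mul_pow_le_half {x : ℝ} (hx0 : 0 ≤ x) (hx : x ≤ 1 / 4) (N : ℕ) :
    ∑ k ∈ range N, (catalan k : ℝ) * x ^ (k + 1) ≤ 1 / 2 := by
  induction N with
  | zero => norm_num
  | succ N ih =>
    have hS0 : 0 ≤ ∑ k ∈ range N, (catalan k : ℝ) * x ^ (k + 1) := by positivity
    have hsq := sum_range_sum_antidiagonal_le_sq
      (f := fun k => (catalan k : ℝ) * x ^ (k + 1)) (fun k => by positivity) N
    simp only [← catalan_succ_mul_pow_eq_sum_antidiagonal] at hsq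
    rw [sum_range_succ', catalan_zero, Nat.cast_one, one_mul, zero_add, pow_one]
    -- `S (N + 1) ≤ S N ^ 2 + x ≤ 1/4 + 1/4`
    nlinarith

theorem hasSum_catalan_mul_pow {x : ℝ} (hx0 : 0 ≤ x) (hx : x ≤ 1 / 4) :
    HasSum (fun k => (catalan k : ℝ) * x ^ (k + 1)) ((1 - √(1 - 4 * x)) / 2) := by
  set a : ℕ → ℝ := fun k => (catalan k : ℝ) * x ^ (k + 1)
  have ha0 : ∀ k, 0 ≤ a k := fun k => by positivity
  have hsum : Summable a := summable_of_sum_range_le ha0 (sum_range_catalan_mul_pow_le_half hx0 hx)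
  have hle : ∑' k, a k ≤ 1 / 2 :=
    Real.tsum_le_of_sum_range_le ha0 (sum_range_catalan_mul_pow_le_half hx0 hx)
  have hnorm : Summable fun k => ‖a k‖ := by simpa only [Real.norm_eq_abs] using hsum.abs
  -- the Cauchy square of the series is its tail, so `L = ∑' a` solves `L ^ 2 = L - x`
  have hfix : (∑' k, a k) ^ 2 = ∑' k, a k - x := by
    rw [sq, tsum_mul_tsum_eq_tsum_sum_antidiagonal_of_summable_norm hnorm hnorm,
      hsum.tsum_eq_zero_add]
    simp [a, ← catalan_succ_mul_pow_eq_sum_antidiagonal]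
  -- `L ≤ 1/2` picks out the root with the minus sign
  have hsqrt : √(1 - 4 * x) = 1 - 2 * ∑' k, a k := by
    rw [show 1 - 4 * x = (1 - 2 * ∑' k, a k) ^ 2 by linear_combination (-4) * hfix]
    exact Real.sqrt_sq (by linarith)
  convert hsum.hasSum using 1
  rw [hsqrt]
  ring

lemma gaussEnt_sub_gaussEnt {x y : ℝ} (hx : 0 < x) (hy : 0 < y) :
    gaussEnt x - gaussEnt y = Real.log (x / y) / (2 * Real.log 2) := by
  unfold gaussEnt Real.logb
  rw [Real.log_div hx.ne' hy.ne', Real.log_mul (by positivity) hx.ne',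
    Real.log_mul (by positivity) hy.ne']
  ring

lemma gaussEnt_le_gaussEnt {x y : ℝ} (hx : 0 < x) (hxy : x ≤ y) :
    gaussEnt x ≤ gaussEnt y := by
  unfold gaussEnt
  gcongr
  norm_num

lemma gaussEnt_le_tangent {x y : ℝ} (hx : 0 < x) (hy : 0 < y) :
    gaussEnt x ≤ gaussEnt y + (2 * Real.log 2 * y)⁻¹ * (x - y) := by
  have hlog2 : 0 < Real.log 2 := Real.log_pos one_lt_two
  have hslope : (2 * Real.log 2 * y)⁻¹ * (x - y) = (x / y - 1) / (2 * Real.log 2) := by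
    field_simp
  have hle : Real.log (x / y) / (2 * Real.log 2) ≤ (x / y - 1) / (2 * Real.log 2) := by
    gcongr
    exact Real.log_le_sub_one_of_pos (div_pos hx hy)
  linarith [gaussEnt_sub_gaussEnt hx hy]

lemma Summable.mul_of_abs_le {ι : Type*} {w g : ι → ℝ} {B : ℝ} (hw : Summable w)
    (hg : ∀ i, |g i| ≤ B) : Summable fun i => w i * g i :=
  (hw.abs.mul_right B).of_norm_bounded fun i => by
    rw [Real.norm_eq_abs, abs_mul]
    exact mul_le_mul_of_nonneg_left (hg i) (abs_nonneg _)

lemma tsum_mul_le_of_le_tangent {ι : Type*} {w x : ι → ℝ} {f : ℝ → ℝ} {W m c : ℝ}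
    (hW : HasSum w W) (hwx : HasSum (fun i => w i * x i) (W * m)) (hw : ∀ i, 0 ≤ w i)
    (hf : ∀ i, f (x i) ≤ f m + c * (x i - m)) (hs : Summable fun i => w i * f (x i)) :
    ∑' i, w i * f (x i) ≤ W * f m := by
  have htangent : HasSum (fun i => w i * (f m + c * (x i - m))) (W * f m) := by
    have h := (hW.mul_right (f m - c * m)).add (hwx.mul_left c)
    rw [show W * (f m - c * m) + c * (W * m) = W * f m by ring] at h
    exact h.congr_fun fun i => by ring
  exact hasSum_le (fun i => mul_le_mul_of_nonneg_left (hf i) (hw i)) hs.hasSum htangent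

lemma hasSum_two_mul_catalan_mul_pow {p : ℝ} (hp0 : 0 ≤ p) (hp : p ≤ 1 / 2) :
    HasSum (fun k => 2 * catalan k * ((1 - p) * p) ^ (k + 1)) (2 * p) := by
  have hsqrt : √(1 - 4 * ((1 - p) * p)) = 1 - 2 * p := by
    rw [show 1 - 4 * ((1 - p) * p) = (1 - 2 * p) ^ 2 by ring]
    exact Real.sqrt_sq (by linarith)
  have h := (hasSum_catalan_mul_pow (x := (1 - p) * p) (by nlinarith) (by nlinarith)).mul_left 2
  rw [hsqrt, show 2 * ((1 - (1 - 2 * p)) / 2) = 2 * p by ring] at h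
  simpa only [mul_assoc] using h

lemma hasSum_two_mul_catalan_mul_pow_mul_one_sub_pow {p r : ℝ} (hp0 : 0 ≤ p) (hp : p ≤ 1 / 2)
    (hr0 : 0 ≤ r) (hr1 : r ≤ 1) :
    HasSum (fun k => 2 * catalan k * ((1 - p) * p) ^ (k + 1) * (1 - r ^ (k + 1)))
      (√(1 - 4 * (1 - p) * p * r) - (1 - 2 * p)) := by
  have hq0 : 0 ≤ (1 - p) * p := by nlinarith
  have hqr : (1 - p) * p * r ≤ 1 / 4 := by nlinarith
  have h := (hasSum_two_mul_catalan_mul_pow hp0 hp).sub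
    ((hasSum_catalan_mul_pow (x := (1 - p) * p * r) (mul_nonneg hq0 hr0) hqr).mul_left 2)
  rw [show 2 * p - 2 * ((1 - √(1 - 4 * ((1 - p) * p * r))) / 2) =
    √(1 - 4 * (1 - p) * p * r) - (1 - 2 * p) by ring_nf] at h
  exact h.congr_fun fun k => by
    rw [mul_pow _ r]
    ring

lemma one_sub_two_mul_lt_sqrt {p r : ℝ} (hp0 : 0 < p) (hp1 : p < 1) (hr1 : r < 1) :
    1 - 2 * p < √(1 - 4 * (1 - p) * p * r) :=
  Real.lt_sqrt_of_sq_lt (by nlinarith [mul_pos (mul_pos (sub_pos.2 hp1) hp0) (sub_pos.2 hr1)])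

/-- Jensen bound for the AR(1) differential entropy sum:
for `0 < p ≤ 1/2` and `0 < ρ < 1`, the series
`Σ_{k=1}^∞ φ(1 − ρ^{4k})·2·C_{k−1}·((1−p)p)^k` converges and is at most
`2p·φ( ((1 − 4(1−p)p ρ⁴)^{1/2} − (1 − 2p)) / (2p) )`. -/
theorem jensen_bound_ar1_entropy_sum
    (p : ℝ) (hp0 : 0 < p) (hp : p ≤ 1 / 2)
    (ρ : ℝ) (hρ1 : 0 < ρ) (hρ2 : ρ < 1) :
    Summable (fun k : ℕ =>
      gaussEnt (1 - ρ ^ (4 * (k + 1))) * 2 * (catalan k : ℝ) * ((1 - p) * p) ^ (k + 1)) ∧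
    (∑' k : ℕ,
        gaussEnt (1 - ρ ^ (4 * (k + 1))) * 2 * (catalan k : ℝ) * ((1 - p) * p) ^ (k + 1))
      ≤ 2 * p * gaussEnt
          ((Real.sqrt (1 - 4 * (1 - p) * p * ρ ^ 4) - (1 - 2 * p)) / (2 * p)) := by
  set r := ρ ^ 4
  have hr0 : 0 < r := by positivity
  have hr1 : r < 1 := pow_lt_one₀ hρ1.le hρ2 (by norm_num)
  have hx : ∀ k : ℕ, 1 - r ≤ 1 - r ^ (k + 1) ∧ 1 - r ^ (k + 1) ≤ 1 := fun k =>
    ⟨by linarith [pow_le_of_le_one hr0.le hr1.le (n := k + 1) (by omega)],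
      by linarith [pow_pos hr0 (k + 1)]⟩
  set w : ℕ → ℝ := fun k => 2 * catalan k * ((1 - p) * p) ^ (k + 1)
  have hW := hasSum_two_mul_catalan_mul_pow hp0.le hp
  have hterm : (fun k : ℕ => gaussEnt (1 - ρ ^ (4 * (k + 1))) * 2 * (catalan k : ℝ) *
      ((1 - p) * p) ^ (k + 1)) = fun k => w k * gaussEnt (1 - r ^ (k + 1)) := by
    funext k
    rw [pow_mul]
    ring
  have hsum : Summable fun k => w k * gaussEnt (1 - r ^ (k + 1)) :=
    hW.summable.mul_of_abs_le fun k => abs_le_max_abs_abs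
      (gaussEnt_le_gaussEnt (by linarith) (hx k).1)
      (gaussEnt_le_gaussEnt (by linarith [hx k]) (hx k).2)
  have hmean : 0 < (√(1 - 4 * (1 - p) * p * r) - (1 - 2 * p)) / (2 * p) :=
    div_pos (sub_pos.2 (one_sub_two_mul_lt_sqrt hp0 (by linarith) hr1)) (by linarith)
  rw [hterm]
  refine ⟨hsum, tsum_mul_le_of_le_tangent hW ?_ (fun k => ?_)
    (fun k => gaussEnt_le_tangent (by linarith [hx k]) hmean) hsum⟩
  · rw [mul_div_cancel₀ _ (by positivity)]
    exact hasSum_two_mul_catalan_mul_pow_mul_one_sub_pow hp0.le hp hr0.le hr1.le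
  · exact mul_nonneg (by positivity) (pow_nonneg (by nlinarith) _)
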